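/- Let r ≥ 1, m ≥ 1 be integers, let V be a complex vector space of dimension rm, and let w_1,…,w_m ∈ ⋀^r V all be nonzero. Then there exist an integer i with 0 ≤ i ≤ m−1 and a tuple (t_1,…,t_m) ∈ (⋀^r V)^m such that Σ_{S ⊆ M, |S| = i} sgn(σ_S) · w_{M∖S} ∧ t_S ≠ 0 in ⋀^{rm} V. (In other words, the Plücker form 𝔻_{r,m} has no point of multiplicity ≥ m.) -/

import Mathlib

open Module ExteriorAlgebra

/-- The permutation `σ_S` of `Fin m` listing first the complement of `S` in increasing
order, then the elements of `S` in increasing order. -/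
def sigmaPerm {m : ℕ} (S : Finset (Fin m)) : Equiv.Perm (Fin m) :=
  (finCongr (by simp [Finset.card_compl_add_card])).symm.trans <|
    finSumFinEquiv.symm.trans <|
      (Equiv.sumCongr (Sᶜ.orderIsoOfFin rfl).toEquiv (S.orderIsoOfFin rfl).toEquiv).trans <|
        (Equiv.sumComm _ _).trans <|
          (Equiv.sumCongr (Equiv.refl _)
              (Equiv.subtypeEquivRight fun _ => Finset.mem_compl)).trans <|
            Equiv.sumCompl (· ∈ S)

/-- The ordered wedge product `w_S = w_{s_1} ∧ ⋯ ∧ w_{s_k}` for `S = {s_1 < ⋯ < s_k}`,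
with `w_∅ = 1`. -/
noncomputable def wedgeFinset {m : ℕ} {V : Type*} [AddCommGroup V] [Module ℂ V]
    (w : Fin m → ExteriorAlgebra ℂ V) (S : Finset (Fin m)) : ExteriorAlgebra ℂ V :=
  ((S.sort (· ≤ ·)).map w).prod

/-- The `i`-th polar expression `∑_{|S| = i} sgn(σ_S) • w_{M∖S} ∧ t_S`. -/
noncomputable def polarSum {m : ℕ} {V : Type*} [AddCommGroup V] [Module ℂ V] {r : ℕ}
    (w t : Fin m → (⋀[ℂ]^r V : Submodule ℂ (ExteriorAlgebra ℂ V))) (i : ℕ) :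
    ExteriorAlgebra ℂ V :=
  ∑ S ∈ Finset.powersetCard i (Finset.univ : Finset (Fin m)),
    (Equiv.Perm.sign (sigmaPerm S) : ℤ) •
      (wedgeFinset (fun a => (w a : ExteriorAlgebra ℂ V)) Sᶜ *
        wedgeFinset (fun a => (t a : ExteriorAlgebra ℂ V)) S)

/-!
Take `i = m - 1` and `t_1 = 0`. Every `S` with `|S| = m - 1` other than `M ∖ {1}` contains `1`,
so the polar sum collapses to `± w_1 ∧ t_2 ∧ ⋯ ∧ t_m`. The wedge pairing
`⋀^r V × ⋀^{r(m-1)} V → ⋀^{rm} V` is nondegenerate: if `e_s` is a basis monomial on which the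
nonzero `w_1` has a nonzero coefficient, then `w_1 ∧ e_{sᶜ}` is a nonzero multiple of the top
monomial. Finally `e_{sᶜ}`, a wedge of `r(m-1)` vectors, is a product of `m - 1` wedges of `r`
vectors each, which serve as `t_2, …, t_m`.
-/

namespace ExteriorAlgebra

open Set.powersetCard

variable {R M I : Type*} [CommRing R] [AddCommGroup M] [Module R M]

theorem ιMulti_eq_prod_blocks {n q r : ℕ} (h : n = q * r) (v : Fin n → M) :
    ιMulti R n v = (List.ofFn fun j : Fin q =>
      ιMulti R r fun i => v (Fin.cast h.symm (finProdFinEquiv (j, i)))).prod := by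
  subst h
  simp only [ιMulti_apply, List.ofFn_mul, List.prod_flatten, List.map_ofFn]
  congr! with j i
  simp [finProdFinEquiv, Nat.add_comm, Nat.mul_comm]

theorem exists_mul_ιMulti_ne_zero [Fintype I] [LinearOrder I] (b : Basis I R M) {k : ℕ}
    {x : ExteriorAlgebra R M} (hx : x ∈ ⋀[R]^k M) (hx0 : x ≠ 0) :
    ∃ v : Fin (Fintype.card I - k) → M, x * ιMulti R _ v ≠ 0 := by
  classical
  set c := (b.exteriorPower k).repr ⟨x, hx⟩
  have hsum : x = ∑ s, c s • ιMulti_family R k b s := by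
    conv_lhs => rw [← show ((⟨x, hx⟩ : ⋀[R]^k M) : ExteriorAlgebra R M) = x from rfl,
      ← (b.exteriorPower k).sum_repr ⟨x, hx⟩]
    simp [c, exteriorPower.basis_apply]
  obtain ⟨s₀, hs₀⟩ : ∃ s₀, c s₀ ≠ 0 := by
    by_contra! h
    exact hx0 (by simp [hsum, h])
  have hk : k ≤ Fintype.card I := card_eq s₀ ▸ Finset.card_le_univ _
  let u := compl (m := Fintype.card I - k) (by omega) s₀
  refine ⟨b ∘ ofFinEmbEquiv.symm u, ?_⟩
  change x * ιMulti_family R _ b u ≠ 0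
  rw [hsum, Finset.sum_mul, Finset.sum_eq_single s₀]
  · rw [smul_mul_assoc,
      ιMulti_family_mul_of_disjoint R b s₀ u (by simp [u, disjoint_compl_right]),
      ← basis_apply_powersetCard, smul_comm, smul_ne_zero_iff_ne,
      ← zero_smul R (b.ExteriorAlgebra _)]
    exact (b.ExteriorAlgebra.linearIndependent.smul_left_injective _).ne hs₀
  · intro s _ hs
    rw [smul_mul_assoc, ιMulti_family_mul_of_not_disjoint, smul_zero]
    obtain ⟨a, has, ha⟩ := (exists_mem_notMem_iff_ne s s₀).mp hs
    exact Finset.not_disjoint_iff.mpr ⟨a, has, by simpa [u, mem_coe_iff] using ha⟩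
  · simp

end ExteriorAlgebra

theorem Fin.sort_compl_zero (m : ℕ) :
    ({0}ᶜ : Finset (Fin (m + 1))).sort (· ≤ ·) = List.ofFn Fin.succ := by
  have hcompl : ({0}ᶜ : Finset (Fin (m + 1))) = Finset.univ.map (Fin.succEmb m) := by
    rw [← Fin.Ioi_zero_eq_map]
    ext a
    simp
  rw [hcompl, ← (Fin.strictMono_succ.strictMonoOn _).map_finsetSort, Fin.sort_univ,
    List.ofFn_eq_map]
  rfl

section wedgeFinset

variable {V : Type*} [AddCommGroup V] [Module ℂ V] {m : ℕ}

theorem wedgeFinset_singleton (w : Fin m → ExteriorAlgebra ℂ V) (a : Fin m) :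
    wedgeFinset w {a} = w a := by
  simp [wedgeFinset]

theorem wedgeFinset_eq_zero_of_mem {w : Fin m → ExteriorAlgebra ℂ V} {S : Finset (Fin m)}
    {a : Fin m} (ha : a ∈ S) (hwa : w a = 0) : wedgeFinset w S = 0 :=
  List.prod_eq_zero (List.mem_map.mpr ⟨a, (Finset.mem_sort _).mpr ha, hwa⟩)

theorem wedgeFinset_compl_singleton_zero (w : Fin (m + 1) → ExteriorAlgebra ℂ V) :
    wedgeFinset w {0}ᶜ = (List.ofFn fun j => w j.succ).prod := by
  rw [wedgeFinset, Fin.sort_compl_zero, List.map_ofFn]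
  rfl

end wedgeFinset

theorem polarSum_eq_smul_of_apply_zero_eq_zero {V : Type*} [AddCommGroup V] [Module ℂ V]
    {r m : ℕ} (w t : Fin (m + 1) → (⋀[ℂ]^r V : Submodule ℂ (ExteriorAlgebra ℂ V)))
    (ht : t 0 = 0) :
    polarSum w t m = (Equiv.Perm.sign (sigmaPerm ({0}ᶜ : Finset (Fin (m + 1)))) : ℤ) •
      ((w 0 : ExteriorAlgebra ℂ V) *
        (List.ofFn fun j => (t j.succ : ExteriorAlgebra ℂ V)).prod) := by
  have hcard : ({0}ᶜ : Finset (Fin (m + 1))).card = m := by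
    rw [Finset.card_compl, Finset.card_singleton, Fintype.card_fin, Nat.add_sub_cancel]
  rw [polarSum, Finset.sum_eq_single_of_mem _ (Finset.mem_powersetCard_univ.mpr hcard),
    compl_compl, wedgeFinset_singleton, wedgeFinset_compl_singleton_zero]
  intro S hS hne
  have h0 : (0 : Fin (m + 1)) ∈ S := by
    by_contra h0
    refine hne (Finset.eq_of_subset_of_card_le (fun a ha => ?_) ?_)
    · simpa using ne_of_mem_of_not_mem ha h0
    · rw [hcard, Finset.mem_powersetCard_univ.mp hS]
  rw [wedgeFinset_eq_zero_of_mem h0 (by simp [ht]), mul_zero, smul_zero]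

theorem exists_polarSum_ne_zero_of_ne_zero
    {V : Type*} [AddCommGroup V] [Module ℂ V] {r m : ℕ}
    (hr : 1 ≤ r) (hm : 1 ≤ m) (hV : finrank ℂ V = r * m)
    (w : Fin m → (⋀[ℂ]^r V : Submodule ℂ (ExteriorAlgebra ℂ V)))
    (hw : ∀ s, w s ≠ 0) :
    ∃ i ≤ m - 1, ∃ t : Fin m → (⋀[ℂ]^r V : Submodule ℂ (ExteriorAlgebra ℂ V)),
      polarSum w t i ≠ 0 := by
  obtain ⟨m, rfl⟩ := Nat.exists_eq_add_of_le' hm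
  have : FiniteDimensional ℂ V := .of_finrank_pos (by rw [hV]; positivity)
  obtain ⟨v, hv⟩ :=
    exists_mul_ιMulti_ne_zero (Module.finBasis ℂ V) (w 0).2 (by simpa using hw 0)
  have hdim : Fintype.card (Fin (finrank ℂ V)) - r = m * r := by
    rw [Fintype.card_fin, hV, Nat.mul_succ, Nat.add_sub_cancel, Nat.mul_comm]
  let t : Fin (m + 1) → ⋀[ℂ]^r V := Fin.cons 0 fun j =>
    exteriorPower.ιMulti ℂ r fun i => v (Fin.cast hdim.symm (finProdFinEquiv (j, i)))
  refine ⟨m, by simp, t, ?_⟩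
  rw [polarSum_eq_smul_of_apply_zero_eq_zero w t rfl, ← Units.smul_def, smul_ne_zero_iff_ne]
  simpa [t, ← ιMulti_eq_prod_blocks hdim] using hv
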